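/- arXiv:2405.04934 — 6 statements merged into one kernel-verified Lean document; each statement's English description precedes it below -/
import Mathlib

section
/- Let R be a finite commutative ring with identity having at least one nonzero zero-divisor. Then Ddim(Γ_E(R)) = 0 (equivalently, Γ_E(R) has exactly one vertex, i.e., all nonzero zero-divisors of R have the same annihilator) if and only if xy = 0 for all (not necessarily distinct) nonzero zero-divisors x, y of R. -/
open SimpleGraph

/-- `Zstar R` is the set of nonzero zero-divisors of the commutative ring `R`. -/
def Zstar (R : Type*) [CommRing R] : Set R :=
  {x : R | x ≠ 0 ∧ ∃ y : R, y ≠ 0 ∧ x * y = 0}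

/-- `annSet R x` is the annihilator of `x`, i.e. `{y : R | x * y = 0}`. -/
def annSet (R : Type*) [CommRing R] (x : R) : Set R :=
  {y : R | x * y = 0}

/-- Two nonzero zero-divisors are equivalent iff they have the same annihilator. -/
instance zdvSetoid (R : Type*) [CommRing R] : Setoid (Zstar R) :=
  ⟨fun a b => annSet R a.1 = annSet R b.1, ⟨fun _ => rfl, Eq.symm, Eq.trans⟩⟩

/-- The vertices of the compressed zero-divisor graph `Γ_E(R)`: equivalence
classes `[x]` of nonzero zero-divisors under equality of annihilators. -/
abbrev CZDVertex (R : Type*) [CommRing R] : Type _ :=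
  Quotient (zdvSetoid R)

/-- The compressed zero-divisor graph `Γ_E(R)`: distinct classes `[x]` and `[y]`
are adjacent iff `x * y = 0` (which is independent of the chosen representatives). -/
def CZDG (R : Type*) [CommRing R] : SimpleGraph (CZDVertex R) where
  Adj u v := u ≠ v ∧ ∃ a b : Zstar R,
    (⟦a⟧ : CZDVertex R) = u ∧ (⟦b⟧ : CZDVertex R) = v ∧ (a : R) * b = 0
  symm := by
    constructor
    rintro u v ⟨huv, a, b, ha, hb, hab⟩
    exact ⟨huv.symm, b, a, hb, ha, by rwa [mul_comm]⟩
  loopless := by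
    constructor
    rintro u ⟨h, -⟩
    exact h rfl

/-- A set `W` of vertices is resolving if any two distinct vertices have
different distance to some vertex of `W`. -/
def IsResolving {V : Type*} (G : SimpleGraph V) (W : Set V) : Prop :=
  ∀ u v : V, u ≠ v → ∃ w ∈ W, G.dist u w ≠ G.dist v w

/-- A set `W` of vertices is dominating if every vertex outside `W` is adjacent
to some vertex of `W`. -/
def IsDominating {V : Type*} (G : SimpleGraph V) (W : Set V) : Prop :=
  ∀ v : V, v ∉ W → ∃ w ∈ W, G.Adj v w

/-- The dominant metric dimension `Ddim G`: the minimum cardinality of a set of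
vertices that is simultaneously resolving and dominating, with the convention
that it is `0` for a graph with exactly one vertex. -/
noncomputable def Ddim {V : Type*} (G : SimpleGraph V) : ℕ∞ :=
  if Nat.card V = 1 then 0
  else sInf {n : ℕ∞ | ∃ W : Set V, IsResolving G W ∧ IsDominating G W ∧ W.encard = n}


section DominantMetricDimension

variable {V : Type*} (G : SimpleGraph V)

lemma isDominating_empty_iff : IsDominating G ∅ ↔ IsEmpty V := by
  simp [IsDominating, isEmpty_iff]

/-- The empty set dominates no nonempty graph, so only the one-vertex convention makes `Ddim`
vanish. -/
lemma ddim_eq_zero_iff [Nonempty V] : Ddim G = 0 ↔ Nat.card V = 1 := by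
  refine ⟨fun h => ?_, fun h => by rw [Ddim, if_pos h]⟩
  by_contra hcard
  rw [Ddim, if_neg hcard, ENat.sInf_eq_zero] at h
  obtain ⟨W, -, hdom, hW⟩ := h
  rw [Set.encard_eq_zero] at hW
  subst hW
  exact not_isEmpty_of_nonempty V ((isDominating_empty_iff G).1 hdom)

end DominantMetricDimension

section ZeroDivisors

variable {R : Type*} [CommRing R]

lemma mem_Zstar_of_mul_eq_zero {x y : R} (hx : x ≠ 0) (hy : y ≠ 0) (hxy : x * y = 0) :
    y ∈ Zstar R :=
  ⟨hy, x, hx, by rwa [mul_comm]⟩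

lemma card_czdVertex_eq_one_iff (hz : (Zstar R).Nonempty) :
    Nat.card (CZDVertex R) = 1 ↔ ∀ x ∈ Zstar R, ∀ y ∈ Zstar R, annSet R x = annSet R y := by
  obtain ⟨x, hx⟩ := hz
  have : Nonempty (CZDVertex R) := ⟨⟦⟨x, hx⟩⟧⟩
  rw [Nat.card_eq_one_iff_unique, and_iff_left this, subsingleton_iff]
  simp only [Quotient.forall, Quotient.eq, Subtype.forall]
  rfl

lemma mul_self_eq_zero_of_annSet_eq
    (h : ∀ x ∈ Zstar R, ∀ y ∈ Zstar R, annSet R x = annSet R y) {x : R} (hx : x ∈ Zstar R) :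
    x * x = 0 := by
  obtain ⟨w, hw, hxw⟩ := hx.2
  have hx_mem : x ∈ annSet R w := show w * x = 0 by rwa [mul_comm]
  rwa [← h x hx w (mem_Zstar_of_mul_eq_zero hx.1 hw hxw)] at hx_mem

lemma annSet_eq_insert_zero_Zstar (h : ∀ x ∈ Zstar R, ∀ y ∈ Zstar R, x * y = 0) {x : R}
    (hx : x ∈ Zstar R) : annSet R x = insert 0 (Zstar R) := by
  ext z
  refine ⟨fun hxz => ?_, ?_⟩
  · rcases eq_or_ne z 0 with rfl | hz
    · exact Set.mem_insert _ _
    · exact Or.inr (mem_Zstar_of_mul_eq_zero hx.1 hz hxz)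
  · rintro (rfl | hz)
    · exact mul_zero x
    · exact h x hx z hz

/-- A common annihilator contains every `x ∈ Z*(R)`, since it kills a partner of `x`. -/
lemma annSet_eq_iff_mul_eq_zero :
    (∀ x ∈ Zstar R, ∀ y ∈ Zstar R, annSet R x = annSet R y) ↔
      ∀ x ∈ Zstar R, ∀ y ∈ Zstar R, x * y = 0 := by
  refine ⟨fun h x hx y hy => ?_, fun h x hx y hy => ?_⟩
  · have hx_mem : x ∈ annSet R y := by rw [← h x hx y hy]; exact mul_self_eq_zero_of_annSet_eq h hx
    exact (mul_comm x y).trans hx_mem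
  · rw [annSet_eq_insert_zero_Zstar h hx, annSet_eq_insert_zero_Zstar h hy]

end ZeroDivisors

theorem stmt_0_general (R : Type*) [CommRing R] (hz : (Zstar R).Nonempty) :
    (Ddim (CZDG R) = 0 ↔ Nat.card (CZDVertex R) = 1) ∧
    (Ddim (CZDG R) = 0 ↔ ∀ x ∈ Zstar R, ∀ y ∈ Zstar R, annSet R x = annSet R y) ∧
    (Ddim (CZDG R) = 0 ↔ ∀ x ∈ Zstar R, ∀ y ∈ Zstar R, x * y = 0) := by
  have : Nonempty (CZDVertex R) := hz.elim fun x hx => ⟨⟦⟨x, hx⟩⟧⟩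
  have hcard := ddim_eq_zero_iff (CZDG R)
  have hann := hcard.trans (card_czdVertex_eq_one_iff hz)
  exact ⟨hcard, hann, hann.trans annSet_eq_iff_mul_eq_zero⟩

/-- For a finite commutative ring `R` with at least one nonzero
zero-divisor, `Ddim (Γ_E R) = 0` (equivalently, `Γ_E R` has exactly one vertex,
i.e. all nonzero zero-divisors have the same annihilator) iff `x * y = 0` for
all (not necessarily distinct) nonzero zero-divisors `x, y`. -/
theorem stmt_0 (R : Type*) [CommRing R] [Finite R] (hz : (Zstar R).Nonempty) :
    (Ddim (CZDG R) = 0 ↔ Nat.card (CZDVertex R) = 1) ∧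
    (Ddim (CZDG R) = 0 ↔ ∀ x ∈ Zstar R, ∀ y ∈ Zstar R, annSet R x = annSet R y) ∧
    (Ddim (CZDG R) = 0 ↔ ∀ x ∈ Zstar R, ∀ y ∈ Zstar R, x * y = 0) :=
  stmt_0_general R hz
end

section
/- Let R be a finite commutative ring with identity having at least one nonzero zero-divisor and not isomorphic (as a ring) to Z_2 × Z_2. Then Ddim(Γ_E(R)) = 0 (equivalently, Γ_E(R) has exactly one vertex) if and only if xy = 0 for all distinct nonzero zero-divisors x, y of R (equivalently, the zero-divisor graph Γ(R) is complete, i.e., diam(Γ(R)) ≤ 1). -/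
/-!
`Ddim` vanishes exactly on one-vertex graphs, since a dominating set of a nonempty graph is
nonempty; and `Γ_E(R)` has one vertex exactly when all nonzero zero-divisors have the same
annihilator. If they do, no nonzero zero-divisor `e` is idempotent (`e` would be killed by
`1 - e`, hence by itself). If some `z ∈ Z*(R)` had `z² ≠ 0`, every power of `z` would be a
nonzero zero-divisor, and in a finite ring one of them is idempotent; so `z² = 0` for all `z`,
i.e. `Z*(R)` lies in the common annihilator and `Γ(R)` is complete.
Conversely, if `Γ(R)` is complete, a zero-divisor `z` with `z² ≠ 0` is forced to be
idempotent, and completeness then collapses `R ⧸ (1 - z)` and `R ⧸ (z)` to `{0, 1}`, so that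
`R ≅ ℤ/2 × ℤ/2`. Otherwise `z² = 0` on `Z*(R)`, and together with completeness this makes the
annihilator of every element of `Z*(R)` equal to `Z*(R) ∪ {0}`.
-/

open SimpleGraph

theorem exists_isIdempotentElem_pow {M : Type*} [Monoid M] [Finite M] (x : M) :
    ∃ n ≠ 0, IsIdempotentElem (x ^ n) := by
  obtain ⟨a, b, hab, heq⟩ := Finite.exists_ne_map_eq_of_infinite (x ^ · : ℕ → M)
  wlog hlt : a < b generalizing a b
  · exact this b a hab.symm heq.symm (hab.lt_or_gt.resolve_left hlt)
  have hperiod : ∀ k m, a ≤ m → x ^ (m + k * (b - a)) = x ^ m := by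
    intro k m hm
    induction k with
    | zero => simp
    | succ k ih =>
      calc x ^ (m + (k + 1) * (b - a)) = x ^ (m + k * (b - a) - a) * x ^ b := by
            rw [← pow_add]; congr 1; rw [add_mul]; omega
        _ = x ^ (m + k * (b - a)) := by
            rw [← heq, ← pow_add]; congr 1; omega
        _ = x ^ m := ih
  refine ⟨(a + 1) * (b - a), mul_ne_zero (by omega) (by omega), ?_⟩
  rw [IsIdempotentElem, ← pow_add]
  exact hperiod _ _ (by nlinarith [Nat.sub_pos_of_lt hlt])

theorem nonempty_ringEquiv_zmod_two {S : Type*} [CommRing S] [Nontrivial S]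
    (h : ∀ x : S, x = 0 ∨ x = 1) : Nonempty (ZMod 2 ≃+* S) := by
  have htwo : (2 : S) = 0 := (h 2).resolve_right fun h2 => one_ne_zero <| by
    rwa [← one_add_one_eq_two, add_eq_left] at h2
  have := CharTwo.of_one_ne_zero_of_two_eq_zero one_ne_zero htwo
  refine ⟨RingEquiv.ofBijective (ZMod.castHom dvd_rfl S) ⟨ZMod.castHom_injective S, fun x => ?_⟩⟩
  rcases h x with rfl | rfl
  exacts [⟨0, map_zero _⟩, ⟨1, map_one _⟩]

theorem IsDominating.nonempty {V : Type*} [Nonempty V] {G : SimpleGraph V} {W : Set V}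
    (h : IsDominating G W) : W.Nonempty := by
  obtain ⟨v⟩ := ‹Nonempty V›
  by_cases hv : v ∈ W
  · exact ⟨v, hv⟩
  · obtain ⟨w, hw, -⟩ := h v hv
    exact ⟨w, hw⟩

theorem Ddim_eq_zero_iff {V : Type*} [Nonempty V] (G : SimpleGraph V) :
    Ddim G = 0 ↔ Nat.card V = 1 := by
  refine ⟨fun h => ?_, fun h => by rw [Ddim, if_pos h]⟩
  by_contra hc
  rw [Ddim, if_neg hc] at h
  have hle : (1 : ℕ∞) ≤ 0 := h ▸ le_sInf (by
    rintro _ ⟨W, -, hdom, rfl⟩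
    exact Set.one_le_encard_iff_nonempty.2 hdom.nonempty)
  exact absurd hle (by simp)

def AnnSetConstOnZstar (R : Type*) [CommRing R] : Prop :=
  ∀ a ∈ Zstar R, ∀ b ∈ Zstar R, annSet R a = annSet R b

def ZeroDivisorGraphComplete (R : Type*) [CommRing R] : Prop :=
  ∀ x ∈ Zstar R, ∀ y ∈ Zstar R, x ≠ y → x * y = 0

section ZeroDivisors

variable {R : Type*} [CommRing R]

theorem mul_mem_Zstar {x : R} (hx : x ∈ Zstar R) (a : R) (h : a * x ≠ 0) : a * x ∈ Zstar R := by
  obtain ⟨-, y, hy, hxy⟩ := hx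
  exact ⟨h, y, hy, by rw [mul_assoc, hxy, mul_zero]⟩

theorem IsIdempotentElem.mem_Zstar {e : R} (he : IsIdempotentElem e) (h0 : e ≠ 0) (h1 : e ≠ 1) :
    e ∈ Zstar R :=
  ⟨h0, 1 - e, sub_ne_zero.2 h1.symm, by rw [mul_sub, mul_one, he.eq, sub_self]⟩

theorem ne_one_of_mem_Zstar {x : R} (hx : x ∈ Zstar R) : x ≠ 1 := by
  rintro rfl
  obtain ⟨-, y, hy, h⟩ := hx
  exact hy (by rwa [one_mul] at h)

theorem nat_card_CZDVertex_eq_one_iff (hz : (Zstar R).Nonempty) :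
    Nat.card (CZDVertex R) = 1 ↔ AnnSetConstOnZstar R := by
  have : Nonempty (CZDVertex R) := ⟨⟦⟨_, hz.some_mem⟩⟧⟩
  rw [Nat.card_eq_one_iff_unique, and_iff_left ‹_›]
  refine ⟨fun _ a ha b hb => Quotient.exact (Subsingleton.elim (⟦⟨a, ha⟩⟧ : CZDVertex R) ⟦⟨b, hb⟩⟧),
    fun hann => ⟨fun u v => Quotient.inductionOn₂ u v fun a b => Quotient.sound ?_⟩⟩
  exact hann a.1 a.2 b.1 b.2

theorem not_isIdempotentElem_of_annSetConstOnZstar (hann : AnnSetConstOnZstar R) {e : R}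
    (he : e ∈ Zstar R) : ¬IsIdempotentElem e := by
  intro hidem
  have hfe : (1 - e) * e = 0 := by rw [sub_mul, one_mul, hidem.eq, sub_self]
  have hf : 1 - e ∈ Zstar R := ⟨sub_ne_zero.2 (ne_one_of_mem_Zstar he).symm, e, he.1, hfe⟩
  have hee : e ∈ annSet R e := by rw [← hann _ hf e he]; exact hfe
  exact he.1 (hidem.eq ▸ hee)

theorem pow_succ_ne_zero_of_annSetConstOnZstar (hann : AnnSetConstOnZstar R) {z : R}
    (hz : z ∈ Zstar R) (hzz : z * z ≠ 0) (n : ℕ) : z ^ (n + 1) ≠ 0 := by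
  induction n with
  | zero => simpa using hz.1
  | succ n ih =>
    have hmem : z ^ (n + 1) ∈ Zstar R := by
      rw [pow_succ]; exact mul_mem_Zstar hz _ (by rwa [← pow_succ])
    intro h
    have hzz' : z ∈ annSet R z := by
      rw [← hann _ hmem z hz]
      exact (pow_succ z (n + 1)).symm.trans h
    exact hzz hzz'

theorem mul_self_eq_zero_of_annSetConstOnZstar [Finite R] (hann : AnnSetConstOnZstar R) {z : R}
    (hz : z ∈ Zstar R) : z * z = 0 := by
  by_contra hzz
  obtain ⟨n, hn, hidem⟩ := exists_isIdempotentElem_pow z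
  obtain ⟨m, rfl⟩ := Nat.exists_eq_succ_of_ne_zero hn
  have hmem : z ^ (m + 1) ∈ Zstar R := by
    rw [pow_succ]
    exact mul_mem_Zstar hz _ (by
      rw [← pow_succ]; exact pow_succ_ne_zero_of_annSetConstOnZstar hann hz hzz m)
  exact not_isIdempotentElem_of_annSetConstOnZstar hann hmem hidem

theorem zeroDivisorGraphComplete_of_annSetConstOnZstar [Finite R]
    (hann : AnnSetConstOnZstar R) : ZeroDivisorGraphComplete R := by
  intro x hx y hy _
  have hyy : y ∈ annSet R y := mul_self_eq_zero_of_annSetConstOnZstar hann hy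
  rwa [hann y hy x hx] at hyy

theorem isIdempotentElem_of_zeroDivisorGraphComplete (hcomp : ZeroDivisorGraphComplete R)
    {z : R} (hz : z ∈ Zstar R) (hzz : z * z ≠ 0) : IsIdempotentElem z := by
  by_contra hne
  have hz3 : z * (z * z) = 0 := hcomp z hz _ (mul_mem_Zstar hz z hzz) (Ne.symm hne)
  -- `s = z + z²` kills `z²` but not `z`, so it is a zero-divisor that `z` fails to kill.
  set s := z + z * z with hs
  have hsz : s * z = z * z := by linear_combination hz3
  have hsZ : s ∈ Zstar R :=
    ⟨fun h => hzz (by rw [← hsz, h, zero_mul]), z * z, hzz, by linear_combination (1 + z) * hz3⟩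
  have hsne : s ≠ z := fun h => hzz (by rwa [hs, add_eq_left] at h)
  exact hzz (by rw [← hsz, hcomp s hsZ z hz hsne])

theorem mul_eq_zero_or_eq_self_of_zeroDivisorGraphComplete (hcomp : ZeroDivisorGraphComplete R)
    {e : R} (he : IsIdempotentElem e) (h1 : e ≠ 1) (a : R) : a * e = 0 ∨ a * e = e := by
  by_contra! h
  have h0 : e ≠ 0 := fun h0 => h.1 (by rw [h0, mul_zero])
  have hae : a * e ∈ Zstar R := mul_mem_Zstar (he.mem_Zstar h0 h1) a h.1
  have := hcomp _ hae e (he.mem_Zstar h0 h1) h.2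
  exact h.1 (by rwa [mul_assoc, he.eq] at this)

theorem nonempty_ringEquiv_quotient_of_zeroDivisorGraphComplete
    (hcomp : ZeroDivisorGraphComplete R) {e : R} (he : IsIdempotentElem e) (h0 : e ≠ 0)
    (h1 : e ≠ 1) : Nonempty (ZMod 2 ≃+* R ⧸ Ideal.span {1 - e}) := by
  have : Nontrivial (R ⧸ Ideal.span {1 - e}) := Ideal.Quotient.nontrivial_iff.2 fun htop =>
    h0 <| ((Ideal.span_singleton_eq_top.1 htop).mul_right_eq_zero).1 <| by
      rw [sub_mul, one_mul, he.eq, sub_self]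
  refine nonempty_ringEquiv_zmod_two fun q => ?_
  obtain ⟨a, rfl⟩ := Ideal.Quotient.mk_surjective q
  have hmk : Ideal.Quotient.mk (Ideal.span {1 - e}) e = 1 := by
    rw [← map_one (Ideal.Quotient.mk _), Ideal.Quotient.eq]
    exact Ideal.mem_span_singleton.2 ⟨-1, by ring⟩
  have ha : Ideal.Quotient.mk (Ideal.span {1 - e}) a = Ideal.Quotient.mk _ (a * e) := by
    rw [map_mul, hmk, mul_one]
  rcases mul_eq_zero_or_eq_self_of_zeroDivisorGraphComplete hcomp he h1 a with h | h
  · exact Or.inl (by rw [ha, h, map_zero])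
  · exact Or.inr (by rw [ha, h, hmk])

theorem nonempty_ringEquiv_zmod_two_prod_of_zeroDivisorGraphComplete
    (hcomp : ZeroDivisorGraphComplete R) {e : R} (he : IsIdempotentElem e) (h0 : e ≠ 0)
    (h1 : e ≠ 1) : Nonempty (R ≃+* ZMod 2 × ZMod 2) := by
  obtain ⟨φ⟩ := nonempty_ringEquiv_quotient_of_zeroDivisorGraphComplete hcomp he h0 h1
  obtain ⟨ψ⟩ := nonempty_ringEquiv_quotient_of_zeroDivisorGraphComplete hcomp he.one_sub
    (sub_ne_zero.2 h1.symm) (by rwa [Ne, sub_eq_self])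
  rw [sub_sub_cancel] at ψ
  have hbij := RingHom.prod_bijective_of_isIdempotentElem he.one_sub he (sub_add_cancel 1 e)
    (by rw [sub_mul, one_mul, he.eq, sub_self])
  exact ⟨(RingEquiv.ofBijective _ hbij).trans (φ.symm.prodCongr ψ.symm)⟩

theorem mul_self_eq_zero_of_zeroDivisorGraphComplete (hcomp : ZeroDivisorGraphComplete R)
    (hiso : ¬Nonempty (R ≃+* ZMod 2 × ZMod 2)) {z : R} (hz : z ∈ Zstar R) : z * z = 0 := by
  by_contra hzz
  exact hiso <| nonempty_ringEquiv_zmod_two_prod_of_zeroDivisorGraphComplete hcomp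
    (isIdempotentElem_of_zeroDivisorGraphComplete hcomp hz hzz) hz.1 (ne_one_of_mem_Zstar hz)

theorem annSetConstOnZstar_of_zeroDivisorGraphComplete (hcomp : ZeroDivisorGraphComplete R)
    (hiso : ¬Nonempty (R ≃+* ZMod 2 × ZMod 2)) : AnnSetConstOnZstar R := by
  suffices hsub : ∀ a ∈ Zstar R, ∀ b ∈ Zstar R, annSet R a ⊆ annSet R b from
    fun a ha b hb => (hsub a ha b hb).antisymm (hsub b hb a ha)
  intro a ha b hb t (hat : a * t = 0)
  show b * t = 0
  by_cases ht0 : t = 0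
  · rw [ht0, mul_zero]
  have ht : t ∈ Zstar R := ⟨ht0, a, ha.1, by rwa [mul_comm]⟩
  by_cases htb : t = b
  · rw [htb]; exact mul_self_eq_zero_of_zeroDivisorGraphComplete hcomp hiso hb
  · rw [mul_comm]; exact hcomp t ht b hb htb

theorem annSetConstOnZstar_iff_zeroDivisorGraphComplete [Finite R]
    (hiso : ¬Nonempty (R ≃+* ZMod 2 × ZMod 2)) :
    AnnSetConstOnZstar R ↔ ZeroDivisorGraphComplete R :=
  ⟨zeroDivisorGraphComplete_of_annSetConstOnZstar,
    (annSetConstOnZstar_of_zeroDivisorGraphComplete · hiso)⟩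

end ZeroDivisors

/-- For a finite commutative ring `R` with at least one nonzero
zero-divisor and not isomorphic to `ℤ/2 × ℤ/2`, `Ddim (Γ_E R) = 0`
(equivalently `Γ_E R` has exactly one vertex) iff `x * y = 0` for all distinct
nonzero zero-divisors `x, y` (i.e. the zero-divisor graph `Γ(R)` is complete). -/
theorem stmt_2 (R : Type*) [CommRing R] [Finite R] (hz : (Zstar R).Nonempty)
    (hiso : ¬Nonempty (R ≃+* (ZMod 2 × ZMod 2))) :
    (Ddim (CZDG R) = 0 ↔ Nat.card (CZDVertex R) = 1) ∧
    (Ddim (CZDG R) = 0 ↔ ∀ x ∈ Zstar R, ∀ y ∈ Zstar R, x ≠ y → x * y = 0) := by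
  have : Nonempty (CZDVertex R) := ⟨⟦⟨_, hz.some_mem⟩⟧⟩
  have hDdim := Ddim_eq_zero_iff (CZDG R)
  exact ⟨hDdim, hDdim.trans <|
    (nat_card_CZDVertex_eq_one_iff hz).trans (annSetConstOnZstar_iff_zeroDivisorGraphComplete hiso)⟩
end

section
/- Let R and S be reduced commutative rings with identity, each having at least one nonzero zero-divisor. If the zero-divisor graphs Γ(R) and Γ(S) are isomorphic as simple graphs, then the compressed zero-divisor graphs Γ_E(R) and Γ_E(S) are isomorphic as simple graphs. -/
open SimpleGraph

/-- The zero-divisor graph `Γ(R)` on the nonzero zero-divisors of `R`: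
distinct vertices `x` and `y` are adjacent iff `x * y = 0`. -/
def ZDG (R : Type*) [CommRing R] : SimpleGraph (Zstar R) where
  Adj x y := x ≠ y ∧ (x : R) * y = 0
  symm := by
    constructor
    rintro x y ⟨h, hxy⟩
    exact ⟨h.symm, by rwa [mul_comm]⟩
  loopless := by
    constructor
    rintro x ⟨h, -⟩
    exact h rfl

/-! In a reduced ring no nonzero element squares to zero, so adjacency in `Γ(R)` is just
`x * y = 0`, and two nonzero zero-divisors have the same annihilator exactly when they have the
same neighbourhood in `Γ(R)` (every nonzero annihilating element is itself a zero-divisor).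
Hence `Γ_E(R)` is the quotient of `Γ(R)` by "same neighbourhood", which a graph isomorphism
respects. -/

section Reduced

variable {R : Type*} [CommRing R] [IsReduced R]

theorem ZDG.adj_iff_mul_eq_zero (a b : Zstar R) : (ZDG R).Adj a b ↔ (a : R) * b = 0 := by
  refine ⟨And.right, fun hab => ⟨?_, hab⟩⟩
  rintro rfl
  exact a.2.1 (IsReduced.eq_zero _ ⟨2, by rwa [pow_two]⟩)

theorem ZDG.neighborSet_eq_preimage_annSet (x : Zstar R) :
    (ZDG R).neighborSet x = Subtype.val ⁻¹' annSet R x :=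
  Set.ext fun c => ZDG.adj_iff_mul_eq_zero x c

theorem annSet_eq_insert_image_neighborSet (x : Zstar R) :
    annSet R x = insert 0 (Subtype.val '' (ZDG R).neighborSet x) := by
  ext y
  rcases eq_or_ne y 0 with rfl | hy
  · simp [annSet]
  constructor
  · intro hxy
    exact Or.inr ⟨⟨y, hy, x, x.2.1, by rwa [mul_comm]⟩, (ZDG.adj_iff_mul_eq_zero _ _).mpr hxy, rfl⟩
  · rintro (rfl | ⟨c, hc, rfl⟩)
    · exact absurd rfl hy
    · exact (ZDG.adj_iff_mul_eq_zero _ _).mp hc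

theorem zdvSetoid_iff_neighborSet_eq (a b : Zstar R) :
    zdvSetoid R a b ↔ (ZDG R).neighborSet a = (ZDG R).neighborSet b := by
  refine ⟨fun h => ?_, fun h => ?_⟩
  · rw [ZDG.neighborSet_eq_preimage_annSet, ZDG.neighborSet_eq_preimage_annSet]
    exact congrArg _ h
  · change annSet R a = annSet R b
    rw [annSet_eq_insert_image_neighborSet, annSet_eq_insert_image_neighborSet, h]

end Reduced

theorem SimpleGraph.Iso.neighborSet_eq_iff {V W : Type*} {G : SimpleGraph V} {H : SimpleGraph W}
    (φ : G ≃g H) (a b : V) :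
    H.neighborSet (φ a) = H.neighborSet (φ b) ↔ G.neighborSet a = G.neighborSet b := by
  rw [← φ.image_neighborSet, ← φ.image_neighborSet]
  exact (Set.image_injective.mpr φ.injective).eq_iff

theorem CZDG.mk_adj_mk_iff {R : Type*} [CommRing R] (a b : Zstar R) :
    (CZDG R).Adj ⟦a⟧ ⟦b⟧ ↔ (⟦a⟧ : CZDVertex R) ≠ ⟦b⟧ ∧ (a : R) * b = 0 := by
  refine ⟨fun ⟨hne, a', b', ha, hb, hab⟩ => ⟨hne, ?_⟩, fun ⟨hne, hab⟩ => ⟨hne, a, b, rfl, rfl, hab⟩⟩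
  have ha' : annSet R a' = annSet R a := Quotient.exact ha
  have hb' : annSet R b' = annSet R b := Quotient.exact hb
  have hab' : (a : R) * b' = 0 := (Set.ext_iff.mp ha' b').mp hab
  have hba : (b : R) * a = 0 := (Set.ext_iff.mp hb' a).mp (show (b' : R) * a = 0 by rwa [mul_comm])
  rwa [mul_comm]

theorem zdvSetoid_map_iff_of_iso {R S : Type*} [CommRing R] [CommRing S] [IsReduced R]
    [IsReduced S] (φ : ZDG R ≃g ZDG S) (a b : Zstar R) :
    zdvSetoid S (φ a) (φ b) ↔ zdvSetoid R a b := by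
  rw [zdvSetoid_iff_neighborSet_eq, zdvSetoid_iff_neighborSet_eq, φ.neighborSet_eq_iff]

noncomputable def CZDG.isoOfZDGIso {R S : Type*} [CommRing R] [CommRing S] [IsReduced R]
    [IsReduced S] (φ : ZDG R ≃g ZDG S) : CZDG R ≃g CZDG S where
  toEquiv := Quotient.congr φ.toEquiv fun a b => (zdvSetoid_map_iff_of_iso φ a b).symm
  map_rel_iff' {u v} := by
    induction u using Quotient.inductionOn with | h a =>
    induction v using Quotient.inductionOn with | h b =>
    change (CZDG S).Adj ⟦φ a⟧ ⟦φ b⟧ ↔ (CZDG R).Adj ⟦a⟧ ⟦b⟧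
    rw [CZDG.mk_adj_mk_iff, CZDG.mk_adj_mk_iff, ← ZDG.adj_iff_mul_eq_zero,
      ← ZDG.adj_iff_mul_eq_zero, φ.map_adj_iff, Ne, Ne, Quotient.eq, Quotient.eq,
      zdvSetoid_map_iff_of_iso]

theorem stmt_4_general (R S : Type*) [CommRing R] [CommRing S] [IsReduced R] [IsReduced S]
    (h : Nonempty (ZDG R ≃g ZDG S)) :
    Nonempty (CZDG R ≃g CZDG S) :=
  h.map CZDG.isoOfZDGIso

/-- If `R` and `S` are reduced commutative rings, each with at
least one nonzero zero-divisor, and their zero-divisor graphs are isomorphic,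
then their compressed zero-divisor graphs are isomorphic. -/
theorem stmt_4 (R S : Type*) [CommRing R] [CommRing S] [IsReduced R] [IsReduced S]
    (hR : (Zstar R).Nonempty) (hS : (Zstar S).Nonempty)
    (h : Nonempty (ZDG R ≃g ZDG S)) :
    Nonempty (CZDG R ≃g CZDG S) :=
  stmt_4_general R S h
end

section
/- Let R be a commutative ring with identity such that the compressed zero-divisor graph Γ_E(R) has exactly three vertices. Then Γ_E(R) is a path on three vertices (i.e., exactly two of the three pairs of distinct vertices are adjacent). -/
open SimpleGraph

/-! Γ_E(R) is always connected: for `a, b ∈ Z*(R)` pick nonzero `x, z` with `a x = 0 = z b`;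
then `a — x — z — b` is a chain of zero products if `x z = 0`, and `a — x z — b` is one
otherwise, and the classes along such a chain are equal or adjacent.
It is never complete once it has three vertices `[a], [b], [c]`: in a complete Γ_E(R) an
element `u` with `u² = 0` annihilates all of Z*(R), so at most one class contains such an
element, whereas `a + b` is a zero-divisor (it kills `c`), and comparing its class with `[a]`
and `[b]` gives `a² = 0` or `b² = 0`, and likewise for the other two pairs.
A connected graph on three vertices which is not complete is a path. -/

section Graph

variable {V : Type*} {G : SimpleGraph V}

lemma SimpleGraph.Reachable.exists_adj {u v : V} (h : G.Reachable u v) (huv : u ≠ v) :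
    ∃ w, G.Adj u w := by
  obtain ⟨p⟩ := h
  exact ⟨p.snd, p.adj_snd (Walk.not_nil_of_ne huv)⟩

lemma SimpleGraph.Preconnected.adj_of_not_adj (hG : G.Preconnected) {u v w : V}
    (hcover : ∀ x, x = u ∨ x = v ∨ x = w) (huv : u ≠ v) (hadj : ¬G.Adj u v) : G.Adj u w := by
  obtain ⟨x, hux⟩ := (hG u v).exists_adj huv
  rcases hcover x with rfl | rfl | rfl
  · exact (G.irrefl hux).elim
  · exact absurd hux hadj
  · exact hux

lemma exists_eq_or_eq_or_eq_of_natCard_eq_three (h : Nat.card V = 3) :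
    ∃ p q r : V, p ≠ q ∧ p ≠ r ∧ q ≠ r ∧ ∀ v, v = p ∨ v = q ∨ v = r := by
  classical
  have : Fintype V := @Fintype.ofFinite V (Nat.finite_of_card_ne_zero (by omega))
  rw [Nat.card_eq_fintype_card, ← Finset.card_univ, Finset.card_eq_three] at h
  obtain ⟨p, q, r, hpq, hpr, hqr, huniv⟩ := h
  exact ⟨p, q, r, hpq, hpr, hqr, fun v => by simpa [huniv] using Finset.mem_univ v⟩

lemma SimpleGraph.Preconnected.exists_path_of_not_adj (hG : G.Preconnected) {u v w : V}
    (hcover : ∀ x, x = u ∨ x = v ∨ x = w) (huv : u ≠ v) (huw : u ≠ w) (hvw : v ≠ w)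
    (hadj : ¬G.Adj u v) :
    ∃ a b c : V, a ≠ b ∧ a ≠ c ∧ b ≠ c ∧ (∀ x, x = a ∨ x = b ∨ x = c) ∧
      G.Adj a b ∧ G.Adj b c ∧ ¬G.Adj a c := by
  have hcover' (x : V) : x = v ∨ x = u ∨ x = w := by rcases hcover x with h | h | h <;> tauto
  refine ⟨u, w, v, huw, huv, hvw.symm, fun x => by rcases hcover x with h | h | h <;> tauto,
    hG.adj_of_not_adj hcover huv hadj, ?_, hadj⟩
  exact (hG.adj_of_not_adj hcover' huv.symm fun h => hadj h.symm).symm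

lemma SimpleGraph.Preconnected.exists_path_of_natCard_eq_three (hG : G.Preconnected)
    (hV : Nat.card V = 3) (htop : G ≠ ⊤) :
    ∃ a b c : V, a ≠ b ∧ a ≠ c ∧ b ≠ c ∧ (∀ v, v = a ∨ v = b ∨ v = c) ∧
      G.Adj a b ∧ G.Adj b c ∧ ¬G.Adj a c := by
  obtain ⟨p, q, r, hpq, hpr, hqr, hcover⟩ := exists_eq_or_eq_or_eq_of_natCard_eq_three hV
  by_cases hpq' : G.Adj p q
  · by_cases hpr' : G.Adj p r
    · by_cases hqr' : G.Adj q r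
      · refine absurd (eq_top_iff.mpr fun x y hxy => ?_) htop
        rcases hcover x with rfl | rfl | rfl <;> rcases hcover y with rfl | rfl | rfl <;>
          first | exact (hxy rfl).elim | assumption | exact Adj.symm ‹_›
      · exact hG.exists_path_of_not_adj (fun x => by rcases hcover x with h | h | h <;> tauto)
          hqr hpq.symm hpr.symm hqr'
    · exact hG.exists_path_of_not_adj (fun x => by rcases hcover x with h | h | h <;> tauto)
        hpr hpq hqr.symm hpr'
  · exact hG.exists_path_of_not_adj hcover hpq hpr hqr hpq'

end Graph

section CompressedZeroDivisorGraph

variable {R : Type*} [CommRing R]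

lemma mul_eq_zero_iff_of_mk_eq {a b : Zstar R} (h : (⟦a⟧ : CZDVertex R) = ⟦b⟧) (y : R) :
    a.1 * y = 0 ↔ b.1 * y = 0 :=
  Set.ext_iff.mp (Quotient.exact h) y

lemma mk_eq_of_forall_mul_eq_zero_iff {a b : Zstar R} (h : ∀ y : R, a.1 * y = 0 ↔ b.1 * y = 0) :
    (⟦a⟧ : CZDVertex R) = ⟦b⟧ :=
  Quotient.sound (Set.ext h)

lemma CZDG_adj_mk {a b : Zstar R} :
    (CZDG R).Adj ⟦a⟧ ⟦b⟧ ↔ (⟦a⟧ : CZDVertex R) ≠ ⟦b⟧ ∧ a.1 * b.1 = 0 := by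
  constructor
  · rintro ⟨hne, a', b', ha, hb, hab⟩
    refine ⟨hne, (mul_eq_zero_iff_of_mk_eq ha _).mp ?_⟩
    rw [mul_comm, ← mul_eq_zero_iff_of_mk_eq hb, mul_comm, hab]
  · rintro ⟨hne, hab⟩
    exact ⟨hne, a, b, rfl, rfl, hab⟩

lemma CZDG_reachable_mk_of_mul_eq_zero {a b : Zstar R} (hab : a.1 * b.1 = 0) :
    (CZDG R).Reachable ⟦a⟧ ⟦b⟧ := by
  by_cases h : (⟦a⟧ : CZDVertex R) = ⟦b⟧
  · exact h ▸ Reachable.refl _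
  · exact (CZDG_adj_mk.mpr ⟨h, hab⟩).reachable

lemma CZDG_preconnected : (CZDG R).Preconnected := by
  rintro ⟨a⟩ ⟨b⟩
  obtain ⟨x, hx, hax⟩ := a.2.2
  obtain ⟨z, hz, hbz⟩ := b.2.2
  have hxa : x * a.1 = 0 := by rw [mul_comm, hax]
  let x' : Zstar R := ⟨x, hx, a.1, a.2.1, hxa⟩
  let z' : Zstar R := ⟨z, hz, b.1, b.2.1, by rw [mul_comm, hbz]⟩
  have hzb : z'.1 * b.1 = 0 := by rw [mul_comm, hbz]
  by_cases hxz : x * z = 0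
  · exact (CZDG_reachable_mk_of_mul_eq_zero (b := x') hax).trans <|
      (CZDG_reachable_mk_of_mul_eq_zero (a := x') (b := z') hxz).trans <|
        CZDG_reachable_mk_of_mul_eq_zero hzb
  · let xz : Zstar R := ⟨x * z, hxz, a.1, a.2.1, by rw [mul_right_comm, hxa, zero_mul]⟩
    exact (CZDG_reachable_mk_of_mul_eq_zero (b := xz) (by rw [← mul_assoc, hax, zero_mul])).trans <|
      CZDG_reachable_mk_of_mul_eq_zero (by rw [mul_assoc, hzb, mul_zero])

lemma mul_eq_zero_of_CZDG_eq_top (hG : CZDG R = ⊤) {a b : Zstar R}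
    (hab : (⟦a⟧ : CZDVertex R) ≠ ⟦b⟧) : a.1 * b.1 = 0 :=
  (CZDG_adj_mk.mp (hG ▸ (top_adj _ _).mpr hab)).2

lemma mul_eq_zero_of_mul_self_eq_zero (hG : CZDG R = ⊤) {u : Zstar R} (hu : u.1 * u.1 = 0)
    (z : Zstar R) : u.1 * z.1 = 0 := by
  by_cases h : (⟦u⟧ : CZDVertex R) = ⟦z⟧
  · rw [mul_comm]
    exact (mul_eq_zero_iff_of_mk_eq h u.1).mp hu
  · exact mul_eq_zero_of_CZDG_eq_top hG h

lemma mk_eq_of_mul_self_eq_zero (hG : CZDG R = ⊤) {u v : Zstar R} (hu : u.1 * u.1 = 0)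
    (hv : v.1 * v.1 = 0) : (⟦u⟧ : CZDVertex R) = ⟦v⟧ := by
  refine mk_eq_of_forall_mul_eq_zero_iff fun y => ?_
  rcases eq_or_ne y 0 with rfl | hy
  · simp
  have transfer {w w' : Zstar R} (hw' : w'.1 * w'.1 = 0) (hwy : w.1 * y = 0) : w'.1 * y = 0 :=
    mul_eq_zero_of_mul_self_eq_zero hG hw' ⟨y, hy, w.1, w.2.1, by rw [mul_comm, hwy]⟩
  exact ⟨transfer hv, transfer hu⟩

lemma mul_self_eq_zero_or_of_CZDG_eq_top (hG : CZDG R = ⊤) {a b c : Zstar R}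
    (hab : (⟦a⟧ : CZDVertex R) ≠ ⟦b⟧) (hac : (⟦a⟧ : CZDVertex R) ≠ ⟦c⟧)
    (hbc : (⟦b⟧ : CZDVertex R) ≠ ⟦c⟧) : a.1 * a.1 = 0 ∨ b.1 * b.1 = 0 := by
  have hsum : a.1 + b.1 ≠ 0 := by
    intro h
    refine hab (mk_eq_of_forall_mul_eq_zero_iff fun y => ?_)
    rw [eq_neg_of_add_eq_zero_right h, neg_mul, neg_eq_zero]
  have hsc : (a.1 + b.1) * c.1 = 0 := by
    rw [add_mul, mul_eq_zero_of_CZDG_eq_top hG hac, mul_eq_zero_of_CZDG_eq_top hG hbc, add_zero]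
  let s : Zstar R := ⟨a.1 + b.1, hsum, c.1, c.2.1, hsc⟩
  have hab0 := mul_eq_zero_of_CZDG_eq_top hG hab
  by_cases hsa : (⟦s⟧ : CZDVertex R) = ⟦a⟧
  · right
    have := mul_eq_zero_of_CZDG_eq_top hG (hsa ▸ hab : (⟦s⟧ : CZDVertex R) ≠ ⟦b⟧)
    rwa [add_mul, hab0, zero_add] at this
  · left
    have := mul_eq_zero_of_CZDG_eq_top hG hsa
    rwa [add_mul, mul_comm b.1, hab0, add_zero] at this

lemma CZDG_ne_top {p q r : CZDVertex R} (hpq : p ≠ q) (hpr : p ≠ r) (hqr : q ≠ r) :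
    CZDG R ≠ ⊤ := by
  intro hG
  induction p using Quotient.inductionOn
  induction q using Quotient.inductionOn
  induction r using Quotient.inductionOn
  rcases mul_self_eq_zero_or_of_CZDG_eq_top hG hpq hpr hqr with ha | hb
  · rcases mul_self_eq_zero_or_of_CZDG_eq_top hG hqr hpq.symm hpr.symm with hb | hc
    exacts [hpq (mk_eq_of_mul_self_eq_zero hG ha hb), hpr (mk_eq_of_mul_self_eq_zero hG ha hc)]
  · rcases mul_self_eq_zero_or_of_CZDG_eq_top hG hpr hpq hqr.symm with ha | hc
    exacts [hpq (mk_eq_of_mul_self_eq_zero hG ha hb), hqr (mk_eq_of_mul_self_eq_zero hG hb hc)]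

end CompressedZeroDivisorGraph

/-- If `Γ_E(R)` has exactly three vertices, then it is a path on
three vertices: exactly two of the three pairs of distinct vertices are
adjacent. -/
theorem stmt_14 (R : Type*) [CommRing R] (h3 : Nat.card (CZDVertex R) = 3) :
    ∃ a b c : CZDVertex R, a ≠ b ∧ a ≠ c ∧ b ≠ c ∧
      (∀ v : CZDVertex R, v = a ∨ v = b ∨ v = c) ∧
      (CZDG R).Adj a b ∧ (CZDG R).Adj b c ∧ ¬(CZDG R).Adj a c := by
  obtain ⟨p, q, r, hpq, hpr, hqr, -⟩ := exists_eq_or_eq_or_eq_of_natCard_eq_three h3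
  exact CZDG_preconnected.exists_path_of_natCard_eq_three h3 (CZDG_ne_top hpq hpr hqr)
end

section
/- Let R be a commutative ring with identity such that the compressed zero-divisor graph Γ_E(R) has at least three vertices. Then Γ_E(R) is not a complete graph; that is, there exist two distinct vertices of Γ_E(R) that are not adjacent. -/
open SimpleGraph

/-!
If `Γ_E(R)` is complete, then inequivalent zero-divisors are orthogonal, and `p * q ≠ 0`
forces `ann p = ann q`. Given pairwise inequivalent `A, B, C`, pick `x` with `A x = 0 ≠ B x`
and `y` separating `ann A` from `ann C`. Some nonzero element kills both `x` and `y`, so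
`x`, `y`, `x + y` are zero-divisors. In the main case `ann x = ann B` and `ann y = ann C`, so
`y B = 0`; then `(x + y) B = x B ≠ 0` gives `ann (x + y) = ann B = ann x ∋ C`, whence `y C = 0`,
a contradiction.
-/

section CompressedZeroDivisorGraph

variable {R : Type*} [CommRing R]

lemma mem_Zstar_of_mul_eq_zero_s15 {a x : R} (ha : a ≠ 0) (hx : x ≠ 0) (hax : a * x = 0) :
    x ∈ Zstar R :=
  ⟨hx, a, ha, by rwa [mul_comm]⟩

lemma mul_eq_zero_of_annSet_eq {p q r : R} (h : annSet R p = annSet R q) (hqr : q * r = 0) :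
    p * r = 0 :=
  (Set.ext_iff.mp h r).mpr hqr

lemma exists_mul_eq_zero_and_mul_ne_zero_of_annSet_ne {a b : R} (h : annSet R a ≠ annSet R b) :
    ∃ x, (a * x = 0 ∧ b * x ≠ 0) ∨ (b * x = 0 ∧ a * x ≠ 0) := by
  by_contra! hx
  exact h (Set.ext fun x => ⟨fun hax => (hx x).1 hax, fun hbx => (hx x).2 hbx⟩)

lemma mul_eq_zero_of_annSet_ne (hK : CZDG R = ⊤) {p q : Zstar R}
    (h : annSet R p ≠ annSet R q) : (p : R) * q = 0 := by
  have hadj : (CZDG R).Adj ⟦p⟧ ⟦q⟧ := by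
    rw [hK]
    exact fun hpq => h (Quotient.exact hpq)
  obtain ⟨-, a, b, ha, hb, hab⟩ := hadj
  have hpb : (p : R) * b = 0 := mul_eq_zero_of_annSet_eq (Quotient.exact ha).symm hab
  have hqp : (q : R) * p = 0 :=
    mul_eq_zero_of_annSet_eq (Quotient.exact hb).symm (by rwa [mul_comm])
  rwa [mul_comm]

lemma annSet_eq_of_mul_ne_zero (hK : CZDG R = ⊤) {p q : R} (hp : p ∈ Zstar R)
    (hq : q ∈ Zstar R) (hpq : p * q ≠ 0) : annSet R p = annSet R q := by
  by_contra h
  exact hpq (mul_eq_zero_of_annSet_ne (p := ⟨p, hp⟩) (q := ⟨q, hq⟩) hK h)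

lemma mul_eq_zero_of_mul_ne_zero_of_orthogonal (hK : CZDG R = ⊤) {a b c x y : R}
    (ha : a ≠ 0) (hb : b ∈ Zstar R) (hc : c ∈ Zstar R) (hbc : b * c = 0)
    (hax : a * x = 0) (hay : a * y = 0) (hbx : b * x ≠ 0) : c * y = 0 := by
  by_contra hcy
  have hxb : annSet R x = annSet R b :=
    annSet_eq_of_mul_ne_zero hK (mem_Zstar_of_mul_eq_zero_s15 ha (right_ne_zero_of_mul hbx) hax) hb
      (by rwa [mul_comm])
  have hyc : annSet R y = annSet R c :=
    annSet_eq_of_mul_ne_zero hK (mem_Zstar_of_mul_eq_zero_s15 ha (right_ne_zero_of_mul hcy) hay) hc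
      (by rwa [mul_comm])
  have hyb : y * b = 0 := mul_eq_zero_of_annSet_eq hyc (by rwa [mul_comm])
  have hxyb : (x + y) * b ≠ 0 := by rwa [add_mul, hyb, add_zero, mul_comm]
  have hxyb' : annSet R (x + y) = annSet R b :=
    annSet_eq_of_mul_ne_zero hK
      (mem_Zstar_of_mul_eq_zero_s15 ha (left_ne_zero_of_mul hxyb) (by rw [mul_add, hax, hay, add_zero]))
      hb hxyb
  have hxc : x * c = 0 := mul_eq_zero_of_annSet_eq hxb hbc
  have hxyc : (x + y) * c = 0 := mul_eq_zero_of_annSet_eq hxyb' hbc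
  exact hcy (by linear_combination hxyc - hxc)

lemma false_of_mul_eq_zero_of_mul_ne_zero (hK : CZDG R = ⊤) (A B C : Zstar R) {x : R}
    (hAC : annSet R A ≠ annSet R C) (hAB : (A : R) * B = 0) (hBC : (B : R) * C = 0)
    (hAx : (A : R) * x = 0) (hBx : (B : R) * x ≠ 0) : False := by
  have hCx : (C : R) * x = 0 := by
    have hxB : annSet R x = annSet R B :=
      annSet_eq_of_mul_ne_zero hK (mem_Zstar_of_mul_eq_zero_s15 A.2.1 (right_ne_zero_of_mul hBx) hAx)
        B.2 (by rwa [mul_comm])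
    rw [mul_comm]
    exact mul_eq_zero_of_annSet_eq hxB hBC
  obtain ⟨y, ⟨hAy, hCy⟩ | ⟨hCy, hAy⟩⟩ := exists_mul_eq_zero_and_mul_ne_zero_of_annSet_ne hAC
  · exact hCy (mul_eq_zero_of_mul_ne_zero_of_orthogonal hK A.2.1 B.2 C.2 hBC hAx hAy hBx)
  · exact hAy (mul_eq_zero_of_mul_ne_zero_of_orthogonal hK C.2.1 B.2 A.2
      (by rwa [mul_comm]) hCx hCy hBx)

lemma eq_or_eq_or_eq_of_CZDG_eq_top (hK : CZDG R = ⊤) (u v w : CZDVertex R) :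
    u = v ∨ u = w ∨ v = w := by
  refine Quotient.inductionOn₃ u v w fun A B C => ?_
  by_contra! hne
  obtain ⟨hAB, hAC, hBC⟩ : annSet R A ≠ annSet R B ∧ annSet R A ≠ annSet R C ∧
      annSet R B ≠ annSet R C :=
    ⟨fun e => hne.1 (Quotient.sound e), fun e => hne.2.1 (Quotient.sound e),
      fun e => hne.2.2 (Quotient.sound e)⟩
  have pAB := mul_eq_zero_of_annSet_ne hK hAB
  have pAC := mul_eq_zero_of_annSet_ne hK hAC
  have pBC := mul_eq_zero_of_annSet_ne hK hBC
  obtain ⟨x, ⟨hAx, hBx⟩ | ⟨hBx, hAx⟩⟩ := exists_mul_eq_zero_and_mul_ne_zero_of_annSet_ne hAB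
  · exact false_of_mul_eq_zero_of_mul_ne_zero hK A B C hAC pAB pBC hAx hBx
  · exact false_of_mul_eq_zero_of_mul_ne_zero hK B A C hBC (by rwa [mul_comm]) pAC hBx hAx

end CompressedZeroDivisorGraph

/-- If `Γ_E(R)` has at least three vertices, then it is not a
complete graph: some two distinct vertices are not adjacent. -/
theorem stmt_15 (R : Type*) [CommRing R]
    (h : ∃ a b c : CZDVertex R, a ≠ b ∧ a ≠ c ∧ b ≠ c) :
    ∃ u v : CZDVertex R, u ≠ v ∧ ¬(CZDG R).Adj u v := by
  obtain ⟨a, b, c, hab, hac, hbc⟩ := h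
  by_contra! hadj
  have hK : CZDG R = ⊤ := eq_top_iff_forall_ne_adj.mpr hadj
  rcases eq_or_eq_or_eq_of_CZDG_eq_top hK a b c with h | h | h <;> contradiction
end

section
/- Let R be a commutative ring with identity that is not an integral domain. If the compressed zero-divisor graph Γ_E(R) contains a cycle, then it contains a cycle of length 3; in other words, the girth of Γ_E(R) is either 3 or infinite. -/
open SimpleGraph

/-!
Suppose `Γ_E(R)` has a cycle but no triangle. A shortest cycle then has length at least 4 and
contains a path `e - a - b - c - d`; the element `ac` is nonzero and kills `b`, `d` and `e`,
which produces a 4-cycle. In a triangle-free `Γ_E(R)`, a nonzero element killing both ends of an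
edge lies in the class of one of them. For a 4-cycle `a - b - c - d` and `t` separating
`ann b` from `ann d`, this applied to `dt` (or `bt`) forces `b² = 0` or `d² = 0`, and likewise
`a² = 0` or `c² = 0`. So two adjacent vertices `x, y` of the 4-cycle square to zero, and then
`x + y` spans a triangle with them.
-/

namespace SimpleGraph

variable {V : Type*} {G : SimpleGraph V}

lemma egirth_le_three_of_adj {x y z : V} (hxy : G.Adj x y) (hyz : G.Adj y z)
    (hzx : G.Adj z x) : G.egirth ≤ 3 := by
  have hc : (Walk.cons hxy (.cons hyz (.cons hzx .nil))).IsCycle := by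
    simp [Walk.cons_isCycle_iff, hxy.ne, hyz.ne, hzx.ne, hzx.ne.symm, hxy.ne.symm]
  exact egirth_le_length hc

lemma Walk.IsCycle.exists_adj_of_four_le_length {u : V} {p : G.Walk u u} (hp : p.IsCycle)
    (h4 : 4 ≤ p.length) : ∃ e a b c d : V, G.Adj e a ∧ G.Adj a b ∧ G.Adj b c ∧ G.Adj c d ∧
      a ≠ c ∧ b ≠ d ∧ e ≠ b ∧ e ≠ c := by
  have hinj := hp.getVert_injOn
  have hadj (i : ℕ) (hi : i < p.length) := p.adj_getVert_succ hi
  have hne (i : ℕ) (hi : i ≤ p.length) := hp.getVert_sub_one_ne_getVert_add_one hi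
  refine ⟨p.penultimate, p.getVert 0, p.getVert 1, p.getVert 2, p.getVert 3, ?_,
    hadj 0 (by lia), hadj 1 (by lia), hadj 2 (by lia), hne 1 (by lia), hne 2 (by lia),
    fun h => ?_, fun h => ?_⟩
  · rw [p.getVert_zero]
    exact p.adj_penultimate hp.not_nil
  · have := hinj (by simp; lia) (by simp; lia) h
    lia
  · have := hinj (by simp; lia) (by simp; lia) h
    lia

end SimpleGraph

section ZeroDivisorGraph

variable {R : Type*} [CommRing R] {a b c d e m x y : R}

lemma annSet_ne_of_mul_eq_zero_of_mul_ne_zero (hx : x * m = 0) (hy : y * m ≠ 0) :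
    annSet R x ≠ annSet R y :=
  fun h => hy (show m ∈ annSet R y from h ▸ hx)

lemma mul_eq_zero_of_annSet_eq_s19 {x' y' : R} (hx : annSet R x = annSet R x')
    (hy : annSet R y = annSet R y') (hxy : x * y = 0) : x' * y' = 0 := by
  have hyx' : y * x' = 0 := by
    rw [mul_comm]
    exact (hx ▸ hxy : y ∈ annSet R x')
  rw [mul_comm]
  exact (hy ▸ hyx' : x' ∈ annSet R y')

variable (R) in
/-- `x` and `y` represent two distinct adjacent vertices of `Γ_E(R)`. -/
structure ZDAdj (x y : R) : Prop where
  left_ne_zero : x ≠ 0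
  right_ne_zero : y ≠ 0
  mul_eq_zero : x * y = 0
  annSet_ne : annSet R x ≠ annSet R y

lemma ZDAdj.symm (h : ZDAdj R x y) : ZDAdj R y x :=
  ⟨h.right_ne_zero, h.left_ne_zero, by rw [mul_comm, h.mul_eq_zero], h.annSet_ne.symm⟩

lemma ZDAdj.mem_zstar (h : ZDAdj R x y) : x ∈ Zstar R :=
  ⟨h.left_ne_zero, y, h.right_ne_zero, h.mul_eq_zero⟩

lemma ZDAdj.czdg_adj (h : ZDAdj R x y) :
    (CZDG R).Adj ⟦⟨x, h.mem_zstar⟩⟧ ⟦⟨y, h.symm.mem_zstar⟩⟧ :=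
  ⟨fun he => h.annSet_ne (Quotient.exact he), _, _, rfl, rfl, h.mul_eq_zero⟩

lemma annSet_out_ne {u v : CZDVertex R} (h : u ≠ v) :
    annSet R (u.out : R) ≠ annSet R (v.out : R) :=
  fun he => h (by rw [← u.out_eq, ← v.out_eq]; exact Quotient.sound he)

lemma zdAdj_out_of_adj {u v : CZDVertex R} (h : (CZDG R).Adj u v) :
    ZDAdj R (u.out : R) (v.out : R) := by
  obtain ⟨hne, a, b, rfl, rfl, hab⟩ := h
  have ha : annSet R a = annSet R (⟦a⟧ : CZDVertex R).out :=
    (Quotient.mk_out (s := zdvSetoid R) a).symm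
  have hb : annSet R b = annSet R (⟦b⟧ : CZDVertex R).out :=
    (Quotient.mk_out (s := zdvSetoid R) b).symm
  exact ⟨(⟦a⟧ : CZDVertex R).out.2.1, (⟦b⟧ : CZDVertex R).out.2.1,
    mul_eq_zero_of_annSet_eq_s19 ha hb hab, annSet_out_ne hne⟩

variable (R) in
def ZDTriangleFree : Prop :=
  ∀ x y z : R, ZDAdj R x y → ZDAdj R y z → ¬ZDAdj R x z

lemma zdTriangleFree_of_egirth_ne_three (h : (CZDG R).egirth ≠ 3) : ZDTriangleFree R :=
  fun _ _ _ hxy hyz hxz => h <| le_antisymm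
    (egirth_le_three_of_adj hxy.czdg_adj hyz.czdg_adj hxz.symm.czdg_adj) three_le_egirth

variable (R) in
structure ZDFourCycle (a b c d : R) : Prop where
  adj_ab : ZDAdj R a b
  adj_bc : ZDAdj R b c
  adj_cd : ZDAdj R c d
  adj_da : ZDAdj R d a
  annSet_ac : annSet R a ≠ annSet R c
  annSet_bd : annSet R b ≠ annSet R d

lemma ZDFourCycle.rotate (h : ZDFourCycle R a b c d) : ZDFourCycle R b c d a :=
  ⟨h.adj_bc, h.adj_cd, h.adj_da, h.adj_ab, h.annSet_bd, h.annSet_ac.symm⟩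

lemma ZDFourCycle.reverse (h : ZDFourCycle R a b c d) : ZDFourCycle R a d c b :=
  ⟨h.adj_da.symm, h.adj_cd.symm, h.adj_bc.symm, h.adj_ab.symm, h.annSet_ac, h.annSet_bd.symm⟩

namespace ZDTriangleFree

lemma mul_ne_zero (hT : ZDTriangleFree R) (hab : ZDAdj R a b) (hbc : ZDAdj R b c)
    (hac : annSet R a ≠ annSet R c) : a * c ≠ 0 :=
  fun h => hT a b c hab hbc ⟨hab.left_ne_zero, hbc.right_ne_zero, h, hac⟩

lemma annSet_eq_or_annSet_eq (hT : ZDTriangleFree R) (hab : ZDAdj R a b) (hm : m ≠ 0)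
    (hma : m * a = 0) (hmb : m * b = 0) : annSet R m = annSet R a ∨ annSet R m = annSet R b := by
  by_contra! h
  exact hT m a b ⟨hm, hab.left_ne_zero, hma, h.1⟩ hab ⟨hm, hab.right_ne_zero, hmb, h.2⟩

lemma annSet_eq_of_mul_eq_zero (hT : ZDTriangleFree R) (hab : ZDAdj R a b) (hbc : ZDAdj R b c)
    (hac : annSet R a ≠ annSet R c) (hm : m ≠ 0) (hma : m * a = 0) (hmb : m * b = 0)
    (hmc : m * c = 0) : annSet R m = annSet R b := by
  rcases hT.annSet_eq_or_annSet_eq hab hm hma hmb with h | h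
  · rcases hT.annSet_eq_or_annSet_eq hbc hm hmb hmc with h' | h'
    · exact h'
    · exact absurd (h.symm.trans h') hac
  · exact h

lemma mul_self_eq_zero_of_mul_eq_zero (hT : ZDTriangleFree R) (h : ZDFourCycle R a b c d)
    {t : R} (hbt : b * t = 0) (hdt : d * t ≠ 0) : b * b = 0 := by
  have hann := hT.annSet_eq_of_mul_eq_zero h.adj_ab h.adj_bc h.annSet_ac hdt
    (by linear_combination t * h.adj_da.mul_eq_zero)
    (by linear_combination d * hbt) (by linear_combination t * h.adj_cd.mul_eq_zero)
  have hb : b ∈ annSet R (d * t) := by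
    show d * t * b = 0
    linear_combination d * hbt
  rwa [hann] at hb

lemma mul_self_eq_zero_or (hT : ZDTriangleFree R) (h : ZDFourCycle R a b c d) :
    b * b = 0 ∨ d * d = 0 := by
  obtain ⟨t, ht⟩ : ∃ t, ¬(t ∈ annSet R b ↔ t ∈ annSet R d) := by
    by_contra! h'
    exact h.annSet_bd (Set.ext h')
  by_cases hbt : b * t = 0
  · exact .inl (hT.mul_self_eq_zero_of_mul_eq_zero h hbt fun hdt => ht (iff_of_true hbt hdt))
  · have hdt : d * t = 0 := by
      by_contra hdt
      exact ht (iff_of_false hbt hdt)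
    exact .inr (hT.mul_self_eq_zero_of_mul_eq_zero h.reverse hdt hbt)

/-- The class of `a + b` is that of `a` or of `b`, but `d` (resp. `c`) tells them apart. -/
lemma false_of_mul_self_eq_zero (hT : ZDTriangleFree R) (h : ZDFourCycle R a b c d)
    (ha : a * a = 0) (hb : b * b = 0) : False := by
  have hab := h.adj_ab.mul_eq_zero
  have hac : (a + b) * c ≠ 0 := by
    rw [add_mul, h.adj_bc.mul_eq_zero, add_zero]
    exact hT.mul_ne_zero h.adj_ab h.adj_bc h.annSet_ac
  have hbd : (a + b) * d ≠ 0 := by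
    rw [add_mul, mul_comm, h.adj_da.mul_eq_zero, zero_add]
    exact hT.mul_ne_zero h.adj_bc h.adj_cd h.annSet_bd
  rcases hT.annSet_eq_or_annSet_eq h.adj_ab (left_ne_zero_of_mul hac)
    (by linear_combination ha + hab) (by linear_combination hab + hb) with he | he
  · exact annSet_ne_of_mul_eq_zero_of_mul_ne_zero
      (by rw [mul_comm]; exact h.adj_da.mul_eq_zero) hbd he.symm
  · exact annSet_ne_of_mul_eq_zero_of_mul_ne_zero h.adj_bc.mul_eq_zero hac he.symm

lemma not_zdFourCycle (hT : ZDTriangleFree R) : ¬ZDFourCycle R a b c d := fun h => by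
  rcases hT.mul_self_eq_zero_or h with hb | hd <;>
    rcases hT.mul_self_eq_zero_or h.rotate with hc | ha
  · exact hT.false_of_mul_self_eq_zero h.rotate hb hc
  · exact hT.false_of_mul_self_eq_zero h ha hb
  · exact hT.false_of_mul_self_eq_zero h.rotate.rotate hc hd
  · exact hT.false_of_mul_self_eq_zero h.rotate.rotate.rotate hd ha

/-- The 4-cycle is `a - b - c - e` if `[ac] = [c]`, and `ac - b - c - d` otherwise. -/
lemma false_of_path (hT : ZDTriangleFree R) (hea : ZDAdj R e a) (hab : ZDAdj R a b)
    (hbc : ZDAdj R b c) (hcd : ZDAdj R c d) (hac : annSet R a ≠ annSet R c)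
    (hbd : annSet R b ≠ annSet R d) (heb : annSet R e ≠ annSet R b)
    (hec : annSet R e ≠ annSet R c) : False := by
  have hac0 := hT.mul_ne_zero hab hbc hac
  have hbd0 := hT.mul_ne_zero hbc hcd hbd
  by_cases hc : annSet R (a * c) = annSet R c
  · have hce : c * e = 0 := by
      have he : e ∈ annSet R (a * c) := by
        show a * c * e = 0
        linear_combination c * hea.mul_eq_zero
      rwa [hc] at he
    exact hT.not_zdFourCycle ⟨hab, hbc, ⟨hbc.right_ne_zero, hea.left_ne_zero, hce, hec.symm⟩,
      hea, hac, heb.symm⟩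
  · have hacb : a * c * b = 0 := by linear_combination c * hab.mul_eq_zero
    have hacd : a * c * d = 0 := by linear_combination a * hcd.mul_eq_zero
    have hdb : d * b ≠ 0 := by rwa [mul_comm]
    exact hT.not_zdFourCycle ⟨⟨hac0, hbc.left_ne_zero, hacb,
      annSet_ne_of_mul_eq_zero_of_mul_ne_zero hacd hbd0⟩, hbc, hcd,
      ⟨hcd.right_ne_zero, hac0, by rw [mul_comm, hacd],
        (annSet_ne_of_mul_eq_zero_of_mul_ne_zero hacb hdb).symm⟩, hc, hbd⟩

end ZDTriangleFree

end ZeroDivisorGraph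

theorem stmt_19_general (R : Type*) [CommRing R] :
    (CZDG R).egirth = 3 ∨ (CZDG R).egirth = ⊤ := by
  rw [or_iff_not_imp_left, egirth_eq_top]
  intro h3
  by_contra hcyc
  obtain ⟨v, p, hp, hlen⟩ := exists_egirth_eq_length.mpr hcyc
  have h4 : 4 ≤ p.length := by
    have hne : p.length ≠ 3 := fun h => h3 (by rw [hlen, h]; rfl)
    have := hp.three_le_length
    omega
  obtain ⟨e, a, b, c, d, hea, hab, hbc, hcd, hac, hbd, heb, hec⟩ :=
    hp.exists_adj_of_four_le_length h4
  exact (zdTriangleFree_of_egirth_ne_three h3).false_of_path (zdAdj_out_of_adj hea)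
    (zdAdj_out_of_adj hab) (zdAdj_out_of_adj hbc) (zdAdj_out_of_adj hcd) (annSet_out_ne hac)
    (annSet_out_ne hbd) (annSet_out_ne heb) (annSet_out_ne hec)

/-- If `R` is a commutative ring that is not an integral domain
and `Γ_E(R)` contains a cycle, then it contains a triangle: the girth of
`Γ_E(R)` is either `3` or infinite. -/
theorem stmt_19 (R : Type*) [CommRing R] (hd : ¬IsDomain R) :
    (CZDG R).egirth = 3 ∨ (CZDG R).egirth = ⊤ :=
  stmt_19_general R
end
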